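/- arXiv:2112.10659 — 2 statements merged into one kernel-verified Lean document; each statement's English description precedes it below -/
import Mathlib

section
/- For n ≥ 2, α > 0, r ∈ [0,1], and probabilities q_x ∈ (0,1), q'_x ∈ (0,1] with ∑_x q_x = 1 over a finite set X, the γ-fairness gap of REFORM with RPTSC equals 1/γ_REFORM = α·∑_{x∈X} (1-r·q'_x)·(1-q'_x)·(1-(1-q_x)^{n-1}). Moreover, 1/γ_REFORM ≤ 1/γ_RPTSC = α·∑_x (1-q'_x)·(1-(1-q_x)^{n-1}), with strict inequality whenever r > 0 and q'_x·(1-q'_x)·(1-(1-q_x)^{n-1}) > 0 for some x. -/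
theorem reform_gamma_fairness {X : Type*} [Fintype X] (q q' : X → ℝ) (α r : ℝ) (n : ℕ)
    (hn : 2 ≤ n) (hα : 0 < α) (hr0 : 0 ≤ r) (hr1 : r ≤ 1)
    (hq : ∀ x, 0 < q x ∧ q x < 1) (hq' : ∀ x, 0 < q' x ∧ q' x ≤ 1)
    (hsum : ∑ x, q x = 1) :
    (∑ x, q x * ((α * (1 / q x - 1) * (1 - (1 - q x) ^ (n - 1)))
        - (α * ((q' x / q x - 1) + r * (1 - q' x) * (q' x / q x)) * (1 - (1 - q x) ^ (n - 1))))
      = α * ∑ x, (1 - r * q' x) * (1 - q' x) * (1 - (1 - q x) ^ (n - 1)))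
    ∧ (α * ∑ x, (1 - r * q' x) * (1 - q' x) * (1 - (1 - q x) ^ (n - 1))
        ≤ α * ∑ x, (1 - q' x) * (1 - (1 - q x) ^ (n - 1)))
    ∧ ((r > 0 ∧ ∃ x, q' x * (1 - q' x) * (1 - (1 - q x) ^ (n - 1)) > 0) →
        α * ∑ x, (1 - r * q' x) * (1 - q' x) * (1 - (1 - q x) ^ (n - 1))
          < α * ∑ x, (1 - q' x) * (1 - (1 - q x) ^ (n - 1))) := by
  have hp : ∀ x, 0 ≤ 1 - (1 - q x) ^ (n - 1) := by
    intro x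
    have h1 : (1 - q x) ^ (n - 1) ≤ 1 := by
      apply pow_le_one₀ (by linarith [(hq x).2]) (by linarith [(hq x).1])
    linarith
  have key : ∀ x, (1 - r * q' x) * (1 - q' x) * (1 - (1 - q x) ^ (n - 1))
      ≤ (1 - q' x) * (1 - (1 - q x) ^ (n - 1)) := by
    intro x
    have h1 : 0 ≤ 1 - q' x := by linarith [(hq' x).2]
    have h2 : 0 ≤ r * q' x := mul_nonneg hr0 (hq' x).1.le
    nlinarith [hp x, mul_nonneg (mul_nonneg h2 h1) (hp x)]
  refine ⟨?_, ?_, ?_⟩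
  · rw [Finset.mul_sum]
    apply Finset.sum_congr rfl
    intro x _
    have hx : q x ≠ 0 := (hq x).1.ne'
    field_simp
    ring
  · apply mul_le_mul_of_nonneg_left _ hα.le
    exact Finset.sum_le_sum fun x _ => key x
  · rintro ⟨hr, x₀, hx₀⟩
    apply mul_lt_mul_of_pos_left _ hα
    apply Finset.sum_lt_sum (fun x _ => key x) ⟨x₀, Finset.mem_univ x₀, ?_⟩
    have h1 : 0 < r * q' x₀ := mul_pos hr (hq' x₀).1
    nlinarith [hx₀, mul_pos h1 hx₀]
end

section
/- Let n ≥ 2 and p ∈ (0,1). Then (1-(1-p)^{n-1})/(1-p^{n-1}) ≤ (1-(1-p)^n)/(1-p^n) if and only if p ≤ 1/2; in particular, for all p ∈ (0,1) and all Δ ∈ [0,1], if (1-(1-p)^n)/(1-p^n) ≥ Δ and p ≥ 1/2 then (1-(1-p)^{n-1})/(1-p^{n-1}) ≥ Δ. -/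
theorem assumption_B_monotonicity (p : ℝ) (n : ℕ) (hn : 2 ≤ n) (hp0 : 0 < p) (hp1 : p < 1) :
    ((1 - (1 - p) ^ (n - 1)) / (1 - p ^ (n - 1)) ≤ (1 - (1 - p) ^ n) / (1 - p ^ n) ↔ p ≤ 1 / 2)
    ∧ (∀ Δ : ℝ, 0 ≤ Δ → Δ ≤ 1 →
        (1 - (1 - p) ^ n) / (1 - p ^ n) ≥ Δ → p ≥ 1 / 2 →
        (1 - (1 - p) ^ (n - 1)) / (1 - p ^ (n - 1)) ≥ Δ) := by
  obtain ⟨k, rfl⟩ : ∃ k, n = k + 2 := ⟨n - 2, by omega⟩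
  have hk1 : k + 2 - 1 = k + 1 := rfl
  rw [hk1]
  set q := 1 - p with hq
  have hq0 : 0 < q := by simp only [hq]; linarith
  have hq1 : q < 1 := by simp only [hq]; linarith
  have hd1 : 0 < 1 - p ^ (k + 1) := by
    have h : p ^ (k+1) < 1 := pow_lt_one₀ hp0.le hp1 (by omega)
    linarith
  have hd2 : 0 < 1 - p ^ (k + 2) := by
    have h : p ^ (k+2) < 1 := pow_lt_one₀ hp0.le hp1 (by omega)
    linarith
  have key : (1 - q ^ (k+2)) * (1 - p ^ (k+1)) - (1 - q ^ (k+1)) * (1 - p ^ (k+2))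
      = p * q * (q ^ k - p ^ k) + p ^ (k+1) * q ^ (k+1) * (q - p) := by ring
  have hdiv : (1 - q ^ (k+1)) / (1 - p ^ (k+1)) ≤ (1 - q ^ (k+2)) / (1 - p ^ (k+2)) ↔
      (1 - q ^ (k+1)) * (1 - p ^ (k+2)) ≤ (1 - q ^ (k+2)) * (1 - p ^ (k+1)) :=
    div_le_div_iff₀ hd1 hd2
  constructor
  · rw [hdiv]
    constructor
    · intro h
      by_contra hc
      push_neg at hc
      have hpq : q < p := by simp only [hq]; linarith
      have h1 : q ^ k ≤ p ^ k := pow_le_pow_left₀ hq0.le hpq.le k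
      have h2 : 0 < p ^ (k+1) * q ^ (k+1) := by positivity
      nlinarith [mul_pos hp0 hq0]
    · intro h
      have hpq : p ≤ q := by simp only [hq]; linarith
      have h1 : p ^ k ≤ q ^ k := pow_le_pow_left₀ hp0.le hpq k
      have h2 : 0 ≤ p ^ (k+1) * q ^ (k+1) := by positivity
      nlinarith [mul_pos hp0 hq0]
  · intro Δ hΔ0 hΔ1 hB hp
    have hpq : q ≤ p := by simp only [hq]; linarith
    have h1 : q ^ k ≤ p ^ k := pow_le_pow_left₀ hq0.le hpq k
    have h2 : 0 ≤ p ^ (k+1) * q ^ (k+1) := by positivity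
    have hmono : (1 - q ^ (k+2)) / (1 - p ^ (k+2)) ≤ (1 - q ^ (k+1)) / (1 - p ^ (k+1)) := by
      rw [div_le_div_iff₀ hd2 hd1]
      nlinarith [mul_pos hp0 hq0]
    linarith [hB]
end
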